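/- Binary interpolation: let D be a partial order that is a dcpo with a basis β : B → D, and let x, y, z : D. If x ≪ z and y ≪ z, then there exists b : B with x ≪ β b, y ≪ β b, and β b ≪ z. -/

import Mathlib

/-- A partial order is a dcpo if every nonempty directed subset has a least upper bound. -/
def IsDcpo (α : Type*) [Preorder α] : Prop :=
  ∀ d : Set α, d.Nonempty → DirectedOn (· ≤ ·) d → ∃ a, IsLUB d a

/-- `x` is way below `y`: for every nonempty directed subset `d` with least upper bound `a`
such that `y ≤ a`, some element of `d` is above `x`. -/
def WayBelow {α : Type*} [Preorder α] (x y : α) : Prop :=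
  ∀ d : Set α, d.Nonempty → DirectedOn (· ≤ ·) d → ∀ a : α, IsLUB d a → y ≤ a →
    ∃ z ∈ d, x ≤ z

/-- `β : B → D` is a basis for the dcpo `D`: every `x : D` is the least upper bound of some
nonempty directed subset of the range of `β` all of whose elements are way below `x`. -/
def IsBasis {B D : Type*} [Preorder D] (β : B → D) : Prop :=
  ∀ x : D, ∃ d : Set D, d.Nonempty ∧ DirectedOn (· ≤ ·) d ∧ d ⊆ Set.range β ∧
    (∀ y ∈ d, WayBelow y x) ∧ IsLUB d x

/-!
The elements `u` with `u ≪ β b ≪ z` for some basis element `β b` form a directed set whose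
least upper bound is `z`: it contains every approximant of every approximant of `z`, and it is
directed because any two approximants of `z` lie below a common one. Applying `x ≪ z` and
`y ≪ z` to this set yields one of its elements above both `x` and `y`, and the basis element
witnessing its membership interpolates.
-/

section WayBelow

variable {D : Type*} [Preorder D] {a b c : D}

lemma WayBelow.le (h : WayBelow a b) : a ≤ b := by
  obtain ⟨w, rfl, haw⟩ := h {b} (Set.singleton_nonempty b) (directedOn_singleton b) b
    isLUB_singleton le_rfl
  exact haw

lemma WayBelow.trans_le (hab : WayBelow a b) (hbc : b ≤ c) : WayBelow a c :=
  fun d hne hdir s hlub hcs => hab d hne hdir s hlub (hbc.trans hcs)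

lemma LE.le.trans_wayBelow (hab : a ≤ b) (hbc : WayBelow b c) : WayBelow a c := by
  intro d hne hdir s hlub hcs
  obtain ⟨w, hw, hbw⟩ := hbc d hne hdir s hlub hcs
  exact ⟨w, hw, hab.trans hbw⟩

lemma DirectedOn.exists_ge_of_wayBelow {d : Set D} (hne : d.Nonempty)
    (hdir : DirectedOn (· ≤ ·) d) (hlub : IsLUB d c) (ha : WayBelow a c) (hb : WayBelow b c) :
    ∃ w ∈ d, a ≤ w ∧ b ≤ w := by
  obtain ⟨w₁, hw₁, haw₁⟩ := ha d hne hdir c hlub le_rfl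
  obtain ⟨w₂, hw₂, hbw₂⟩ := hb d hne hdir c hlub le_rfl
  obtain ⟨w, hw, hw₁w, hw₂w⟩ := hdir w₁ hw₁ w₂ hw₂
  exact ⟨w, hw, haw₁.trans hw₁w, hbw₂.trans hw₂w⟩

end WayBelow

namespace IsBasis

variable {B D : Type*} [Preorder D] {β : B → D}

lemma exists_wayBelow_ge_of_wayBelow (hβ : IsBasis β) {x y z : D}
    (hx : WayBelow x z) (hy : WayBelow y z) :
    ∃ b, x ≤ β b ∧ y ≤ β b ∧ WayBelow (β b) z := by
  obtain ⟨d, hne, hdir, hrange, hwb, hlub⟩ := hβ z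
  obtain ⟨w, hw, hxw, hyw⟩ := hdir.exists_ge_of_wayBelow hne hlub hx hy
  obtain ⟨b, rfl⟩ := hrange hw
  exact ⟨b, hxw, hyw, hwb _ hw⟩

def twoStepApprox (β : B → D) (z : D) : Set D :=
  {u | ∃ b, WayBelow u (β b) ∧ WayBelow (β b) z}

lemma twoStepApprox_nonempty (hβ : IsBasis β) (z : D) : (twoStepApprox β z).Nonempty := by
  obtain ⟨d, ⟨v, hv⟩, -, hrange, hwb, -⟩ := hβ z
  obtain ⟨b, rfl⟩ := hrange hv
  obtain ⟨e, ⟨u, hu⟩, -, -, hwb', -⟩ := hβ (β b)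
  exact ⟨u, b, hwb' u hu, hwb _ hv⟩

lemma directedOn_twoStepApprox (hβ : IsBasis β) (z : D) :
    DirectedOn (· ≤ ·) (twoStepApprox β z) := by
  rintro u₁ ⟨b₁, hu₁, hb₁⟩ u₂ ⟨b₂, hu₂, hb₂⟩
  obtain ⟨b, hb₁b, hb₂b, hbz⟩ := hβ.exists_wayBelow_ge_of_wayBelow hb₁ hb₂
  obtain ⟨c, hu₁c, hu₂c, hcb⟩ :=
    hβ.exists_wayBelow_ge_of_wayBelow (hu₁.trans_le hb₁b) (hu₂.trans_le hb₂b)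
  exact ⟨β c, ⟨b, hcb, hbz⟩, hu₁c, hu₂c⟩

lemma isLUB_twoStepApprox (hβ : IsBasis β) (z : D) : IsLUB (twoStepApprox β z) z := by
  refine ⟨fun u ⟨b, hu, hb⟩ => hu.le.trans hb.le, fun c hc => ?_⟩
  obtain ⟨d, -, -, hrange, hwb, hlub⟩ := hβ z
  refine hlub.2 fun v hv => ?_
  obtain ⟨b, rfl⟩ := hrange hv
  obtain ⟨e, -, -, -, hwb', hlub'⟩ := hβ (β b)
  exact hlub'.2 fun u hu => hc ⟨b, hwb' u hu, hwb _ hv⟩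

end IsBasis

theorem binary_interpolation_general {B D : Type*} [PartialOrder D]
    (β : B → D) (hβ : IsBasis β) (x y z : D)
    (hxz : WayBelow x z) (hyz : WayBelow y z) :
    ∃ b : B, WayBelow x (β b) ∧ WayBelow y (β b) ∧ WayBelow (β b) z := by
  obtain ⟨u, ⟨b, hub, hbz⟩, hxu, hyu⟩ :=
    (hβ.directedOn_twoStepApprox z).exists_ge_of_wayBelow (hβ.twoStepApprox_nonempty z)
      (hβ.isLUB_twoStepApprox z) hxz hyz
  exact ⟨b, hxu.trans_wayBelow hub, hyu.trans_wayBelow hub, hbz⟩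

/-- Binary interpolation: in a dcpo with basis `β`, if `x ≪ z` and `y ≪ z` then there is
a basis element `β b` with `x ≪ β b`, `y ≪ β b` and `β b ≪ z`. -/
theorem binary_interpolation {B D : Type*} [PartialOrder D]
    (hD : IsDcpo D) (β : B → D) (hβ : IsBasis β) (x y z : D)
    (hxz : WayBelow x z) (hyz : WayBelow y z) :
    ∃ b : B, WayBelow x (β b) ∧ WayBelow y (β b) ∧ WayBelow (β b) z :=
  binary_interpolation_general β hβ x y z hxz hyz
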